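/- Let (A, [·,·]) be a Lie superalgebra over a field of characteristic zero and let R : A → A be a Rota-Baxter operator of weight zero on A. Then the even bilinear product x ∘ y := [R(x), y], defined for homogeneous x, y ∈ A, makes (A, ∘) a pre-Lie superalgebra. -/
import Mathlib


/-- The super sign `(−1)^{|x||y|}` for parities `i`, `j`. -/
def sgn (K : Type*) [Field K] (i j : ZMod 2) : K := (-1 : K) ^ (i.val * j.val)

/-- if `R` is a Rota-Baxter operator of weight zero on a Lie superalgebra
`(A,[·,·])`, then `x ∘ y := [R(x),y]` makes `A` a pre-Lie superalgebra. -/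
theorem stmt7 {K A : Type*} [Field K] [CharZero K] [AddCommGroup A] [Module K A]
    (𝒜 : ZMod 2 → Submodule K A) (hgr : DirectSum.IsInternal 𝒜)
    (br : A →ₗ[K] A →ₗ[K] A)
    (hbr_even : ∀ (i j : ZMod 2), ∀ x ∈ 𝒜 i, ∀ y ∈ 𝒜 j, br x y ∈ 𝒜 (i + j))
    (hskew : ∀ (i j : ZMod 2), ∀ x ∈ 𝒜 i, ∀ y ∈ 𝒜 j, br x y = -(sgn K i j • br y x))
    (hjacobi : ∀ (i j k : ZMod 2), ∀ x ∈ 𝒜 i, ∀ y ∈ 𝒜 j, ∀ z ∈ 𝒜 k,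
      br x (br y z) = br (br x y) z + sgn K i j • br y (br x z))
    (R : A →ₗ[K] A) (hR : ∀ (i : ZMod 2), ∀ x ∈ 𝒜 i, R x ∈ 𝒜 i)
    (hRB : ∀ (i j : ZMod 2), ∀ x ∈ 𝒜 i, ∀ y ∈ 𝒜 j,
      br (R x) (R y) = R (br (R x) y - sgn K i j • br (R y) x)) :
    -- the product x ∘ y := [R(x),y] is even
    (∀ (i j : ZMod 2), ∀ x ∈ 𝒜 i, ∀ y ∈ 𝒜 j, br (R x) y ∈ 𝒜 (i + j)) ∧
    -- pre-Lie super-identity for x ∘ y := [R(x),y]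
    (∀ (i j k : ZMod 2), ∀ x ∈ 𝒜 i, ∀ y ∈ 𝒜 j, ∀ z ∈ 𝒜 k,
      br (R (br (R x) y)) z - br (R x) (br (R y) z)
        = sgn K i j • (br (R (br (R y) x)) z - br (R y) (br (R x) z))) := by
  constructor
  · intro i j x hx y hy
    exact hbr_even i j (R x) (hR i x hx) y hy
  · intro i j k x hx y hy z hz
    have h1 := hRB i j x hx y hy
    have h2 := hjacobi i j k (R x) (hR i x hx) (R y) (hR j y hy) z hz
    have h3 : R (br (R x) y) = br (R x) (R y) + sgn K i j • R (br (R y) x) := by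
      rw [h1, map_sub, map_smul]; abel
    rw [h3, map_add, map_smul, LinearMap.add_apply, LinearMap.smul_apply, h2, smul_sub]
    abel
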